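/- Let n ≥ 3 be odd, S = {a, a^{-1}, a^2 b, b} ⊆ D_{2n}, and Γ = Cay(D_{2n}, S). Then Aut(Γ) = K R(D_{2n}), where K ≅ Z_2^n is the kernel of the action of Aut(Γ) on the partition {⟨ab⟩ a^i : 0 ≤ i ≤ n-1}, K ∩ R(D_{2n}) = 1, and in particular |Aut(Γ)| = 2^{n+1} n and Aut(Γ) is soluble. -/

import Mathlib

open DihedralGroup Pointwise

/-- The automorphism group of the Cayley (di)graph `Cay(G,S)`, as a subgroup of `Sym(G)`. -/
def cayleyAut (G : Type*) [Group G] (S : Set G) : Subgroup (Equiv.Perm G) where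
  carrier := {f | ∀ x y : G, y * x⁻¹ ∈ S ↔ f y * (f x)⁻¹ ∈ S}
  one_mem' := by intro x y; rfl
  mul_mem' := by
    intro f g hf hg x y
    exact (hg x y).trans (hf (g x) (g y))
  inv_mem' := by
    intro f hf x y
    have h := hf (f⁻¹ x) (f⁻¹ y)
    simpa using h.symm

/-- The right regular representation of `G` in `Sym(G)`, as a homomorphism. -/
def rightRegHom (G : Type*) [Group G] : G →* Equiv.Perm G where
  toFun g := Equiv.mulRight g⁻¹
  map_one' := by ext x; simp
  map_mul' a b := by ext x; simp [mul_assoc]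

/-- The subgroup `R(G) ≤ Sym(G)` of all right translations. -/
def rightRegRep (G : Type*) [Group G] : Subgroup (Equiv.Perm G) := (rightRegHom G).range

/-- `S = {a, a⁻¹, a²b, b}`. -/
def stdS (n : ℕ) : Set (DihedralGroup n) :=
  {DihedralGroup.r 1, (DihedralGroup.r 1)⁻¹,
    DihedralGroup.r 1 ^ 2 * DihedralGroup.sr 0, DihedralGroup.sr 0}

/-- The block `⟨ab⟩aⁱ = {aⁱ, ab·aⁱ}`. -/
def block (n : ℕ) (i : ZMod n) : Set (DihedralGroup n) :=
  {DihedralGroup.r i, DihedralGroup.r 1 * DihedralGroup.sr 0 * DihedralGroup.r i}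

/-- The kernel `K` of the action of `Aut(Γ)` on the partition `{⟨ab⟩aⁱ : i}`:
automorphisms fixing every block setwise. -/
def blockKernel (n : ℕ) : Subgroup (Equiv.Perm (DihedralGroup n)) :=
  cayleyAut (DihedralGroup n) (stdS n) ⊓
    ⨅ i : ZMod n, MulAction.stabilizer (Equiv.Perm (DihedralGroup n)) (block n i)

/-!
`blockIndex` maps `D_{2n}` onto `ZMod n`, with fibres the blocks `⟨ab⟩aⁱ`, and two vertices of
`Γ` are adjacent iff their block indices differ by `±1`: `Γ` is the cycle `C_n` with every vertex
replaced by two independent ones. As `4 ≠ 0` in `ZMod n`, two vertices have the same neighbours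
only if they lie in the same block, so every automorphism permutes the blocks along an
automorphism of `C_n`, i.e. a rotation or a reflection of `ZMod n`, and a right translation
realises the same permutation of the blocks. Hence `Aut(Γ) = K·R(D_{2n})`. An element of `K`
fixes or swaps each block independently, so `K ≅ Z₂ⁿ`, and no nontrivial right translation
fixes every block. So `K` is a normal complement of `R(D_{2n}) ≅ D_{2n}` in `Aut(Γ)`, which gives
the order and, both being soluble, the solubility.
-/

theorem Subgroup.IsComplement'.isSolvable {G : Type*} [Group G] {H N : Subgroup G} [N.Normal]
    (h : H.IsComplement' N) [Group.IsSolvable H] [Group.IsSolvable N] : Group.IsSolvable G :=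
  (Group.isSolvable_iff_subgroup_quotient N).mpr
    ⟨inferInstance, Group.isSolvable_of_surjective (f := h.QuotientMulEquiv.symm.toMonoidHom)
      h.QuotientMulEquiv.symm.surjective⟩

theorem two_ne_zero_of_four_ne_zero {R : Type*} [Semiring R] (h : (4 : R) ≠ 0) :
    (2 : R) ≠ 0 := fun h2 ↦ h (by rw [show (4 : R) = 2 * 2 by norm_num, h2, zero_mul])

theorem ZMod.four_ne_zero_of_odd {n : ℕ} (hn : n ≠ 1) (hodd : Odd n) : (4 : ZMod n) ≠ 0 := by
  intro h
  have h4 : n ∣ 4 := (ZMod.natCast_eq_zero_iff 4 n).mp (by exact_mod_cast h)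
  have : n ≤ 4 := Nat.le_of_dvd (by norm_num) h4
  interval_cases n <;> simp_all [Nat.odd_iff]

theorem Multiplicative.zmod_two_eq_one_or (z : Multiplicative (ZMod 2)) :
    z = 1 ∨ z = Multiplicative.ofAdd 1 := by
  revert z; decide

namespace DihedralGroup

variable {n : ℕ}

def sign : DihedralGroup n →* ℤˣ where
  toFun
    | r _ => 1
    | sr _ => -1
  map_one' := rfl
  map_mul' := by rintro (i | i) (j | j) <;> simp [r_mul_r, r_mul_sr, sr_mul_r, sr_mul_sr]

@[simp] theorem sign_r (i : ZMod n) : sign (r i) = 1 := rfl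
@[simp] theorem sign_sr (i : ZMod n) : sign (sr i) = -1 := rfl

instance : Group.IsSolvable (DihedralGroup n) := by
  refine Group.isSolvable_of_ker_le_range (zpowersHom _ (r 1)) sign ?_
  rintro (i | i) h
  · exact ⟨Multiplicative.ofAdd (i.cast : ℤ), by simp⟩
  · exact absurd h (by simp [MonoidHom.mem_ker])

end DihedralGroup

theorem mulRight_mem_cayleyAut {G : Type*} [Group G] (S : Set G) (g : G) :
    Equiv.mulRight g ∈ cayleyAut G S := by
  intro x y
  simp [mul_assoc]

theorem rightRegHom_injective (G : Type*) [Group G] : Function.Injective (rightRegHom G) :=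
  (injective_iff_map_eq_one _).mpr fun g hg ↦ by
    simpa [rightRegHom] using congrArg (fun f : Equiv.Perm G ↦ f 1) hg

theorem rightRegRep_le_cayleyAut {G : Type*} [Group G] (S : Set G) :
    rightRegRep G ≤ cayleyAut G S := by
  rintro _ ⟨g, rfl⟩
  exact mulRight_mem_cayleyAut S g⁻¹

theorem card_rightRegRep (G : Type*) [Group G] : Nat.card (rightRegRep G) = Nat.card G :=
  (Nat.card_congr (MonoidHom.ofInjective (rightRegHom_injective G)).toEquiv).symm

instance (G : Type*) [Group G] [Group.IsSolvable G] : Group.IsSolvable (rightRegRep G) :=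
  Group.isSolvable_of_surjective (rightRegHom G).rangeRestrict_surjective

section cycle

variable {n : ℕ}

def cycleAdj (i j : ZMod n) : Prop := j - i = 1 ∨ j - i = -1

theorem eq_of_cycleAdj_add_one_of_cycleAdj_sub_one (h4 : (4 : ZMod n) ≠ 0) {i j : ZMod n}
    (h₁ : cycleAdj i (j + 1)) (h₂ : cycleAdj i (j - 1)) : i = j := by
  rcases h₁ with h₁ | h₁ <;> rcases h₂ with h₂ | h₂
  · exact absurd (by linear_combination 2 * h₁ - 2 * h₂) h4
  · linear_combination -h₂
  · exact absurd (by linear_combination h₁ - h₂) h4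
  · exact absurd (by linear_combination 2 * h₁ - 2 * h₂) h4

theorem exists_units_mul_add_of_cycleAdj [NeZero n] (h2 : (2 : ZMod n) ≠ 0)
    {c : ZMod n → ZMod n} (hc : Function.Injective c) (hadj : ∀ i, cycleAdj (c i) (c (i + 1))) :
    ∃ ε : ℤˣ, ∀ i, c i = ε * i + c 0 := by
  set ε := c 1 - c 0
  have hε : ε = 1 ∨ ε = -1 := by simpa [cycleAdj] using hadj 0
  have key : ∀ k : ℕ, c k = ε * k + c 0 ∧ c (k + 1) = ε * (k + 1) + c 0 := by
    intro k
    induction k with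
    | zero => exact ⟨by simp, by simp [ε]⟩
    | succ k ih =>
      obtain ⟨ih₁, ih₂⟩ := ih
      have hne : c (k + 1 + 1) ≠ c k := fun h ↦ h2 (by linear_combination hc h)
      have hstep : c (k + 1 + 1) - c (k + 1) = ε := by
        rcases hadj (k + 1) with h | h <;> rcases hε with hε | hε
        · rw [h, hε]
        · exact absurd (by linear_combination h + ih₂ - ih₁ + hε) hne
        · exact absurd (by linear_combination h + ih₂ - ih₁ + hε) hne
        · rw [h, hε]
      push_cast
      exact ⟨ih₂, by linear_combination hstep + ih₂⟩
  obtain ⟨ε', hε'⟩ : ∃ ε' : ℤˣ, (ε' : ZMod n) = ε := by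
    rcases hε with h | h
    · exact ⟨1, by simp [h]⟩
    · exact ⟨-1, by simp [h]⟩
  refine ⟨ε', fun i ↦ ?_⟩
  simpa [hε'] using (key i.val).1

end cycle

namespace DihedralGroup

variable {n : ℕ}

/-- `x` lies in the block `⟨ab⟩aⁱ` with `i = blockIndex x`. -/
def blockIndex : DihedralGroup n → ZMod n
  | r i => i
  | sr j => j + 1

def partner : DihedralGroup n → DihedralGroup n
  | r i => sr (i - 1)
  | sr j => r (j + 1)

@[simp] theorem blockIndex_r (i : ZMod n) : blockIndex (r i) = i := rfl
@[simp] theorem blockIndex_sr (j : ZMod n) : blockIndex (sr j) = j + 1 := rfl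

@[simp] theorem blockIndex_partner (x : DihedralGroup n) :
    blockIndex (partner x) = blockIndex x := by
  cases x <;> simp [partner]

@[simp] theorem partner_partner (x : DihedralGroup n) : partner (partner x) = x := by
  cases x <;> simp [partner]

theorem partner_ne (x : DihedralGroup n) : partner x ≠ x := by
  cases x <;> simp [partner]

theorem eq_or_eq_partner_of_blockIndex_eq {x y : DihedralGroup n}
    (h : blockIndex y = blockIndex x) : y = x ∨ y = partner x := by
  cases x <;> cases y <;> simp only [blockIndex_r, blockIndex_sr] at h <;>
    simp only [partner, r.injEq, sr.injEq, reduceCtorEq, or_false, false_or] <;>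
    linear_combination h

theorem blockIndex_mul (x g : DihedralGroup n) :
    blockIndex (x * g) = sign g * blockIndex x + blockIndex g := by
  cases x <;> cases g <;>
    simp only [r_mul_r, r_mul_sr, sr_mul_r, sr_mul_sr, blockIndex_r, blockIndex_sr, sign_r,
      sign_sr] <;>
    push_cast <;> ring

theorem exists_sign_eq_blockIndex_eq (ε : ℤˣ) (i : ZMod n) :
    ∃ g : DihedralGroup n, sign g = ε ∧ blockIndex g = i := by
  rcases Int.units_eq_one_or ε with rfl | rfl
  · exact ⟨r i, rfl, rfl⟩
  · exact ⟨sr (i - 1), rfl, sub_add_cancel i 1⟩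

theorem mem_block_iff {i : ZMod n} {x : DihedralGroup n} :
    x ∈ block n i ↔ blockIndex x = i := by
  cases x <;>
    simp only [block, r_mul_sr, sr_mul_r, zero_sub, Set.mem_insert_iff, Set.mem_singleton_iff,
      r.injEq, sr.injEq, reduceCtorEq, or_false, false_or, blockIndex_r, blockIndex_sr]
  grind

theorem mul_inv_mem_stdS_iff {x y : DihedralGroup n} :
    y * x⁻¹ ∈ stdS n ↔ cycleAdj (blockIndex x) (blockIndex y) := by
  cases x <;> cases y <;>
    simp only [stdS, cycleAdj, inv_r, inv_sr, pow_two, r_mul_r, r_mul_sr, sr_mul_r, sr_mul_sr,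
      zero_sub, neg_add_rev, Set.mem_insert_iff, Set.mem_singleton_iff, r.injEq, sr.injEq,
      reduceCtorEq, or_self, or_false, false_or, blockIndex_r, blockIndex_sr] <;>
    grind

end DihedralGroup

section automorphisms

variable {n : ℕ}

theorem mem_cayleyAut_stdS_iff {f : Equiv.Perm (DihedralGroup n)} :
    f ∈ cayleyAut (DihedralGroup n) (stdS n) ↔ ∀ x y,
      cycleAdj (blockIndex x) (blockIndex y) ↔ cycleAdj (blockIndex (f x)) (blockIndex (f y)) :=
  forall₂_congr fun _ _ ↦ by rw [mul_inv_mem_stdS_iff, mul_inv_mem_stdS_iff]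

theorem mem_blockKernel_iff {f : Equiv.Perm (DihedralGroup n)} :
    f ∈ blockKernel n ↔ ∀ x, blockIndex (f x) = blockIndex x := by
  refine ⟨fun hf x ↦ ?_, fun h ↦ ⟨?_, Subgroup.mem_iInf.mpr fun i ↦ ?_⟩⟩
  · have hstab : f • block n (blockIndex x) = block n (blockIndex x) :=
      Subgroup.mem_iInf.mp (Subgroup.mem_inf.mp hf).2 _
    rw [← mem_block_iff, ← hstab]
    exact Set.smul_mem_smul_set (mem_block_iff.mpr rfl)
  · exact mem_cayleyAut_stdS_iff.mpr fun x y ↦ by rw [h, h]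
  · ext y
    rw [Set.mem_smul_set_iff_inv_smul_mem, mem_block_iff, mem_block_iff, Equiv.Perm.smul_def,
      ← h (f⁻¹ y), Equiv.Perm.coe_inv, Equiv.apply_symm_apply]

theorem blockKernel_le_cayleyAut : blockKernel n ≤ cayleyAut (DihedralGroup n) (stdS n) :=
  inf_le_left

theorem blockIndex_apply_eq_of_mem_cayleyAut (h4 : (4 : ZMod n) ≠ 0)
    {f : Equiv.Perm (DihedralGroup n)} (hf : f ∈ cayleyAut (DihedralGroup n) (stdS n))
    {x y : DihedralGroup n} (hxy : blockIndex x = blockIndex y) :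
    blockIndex (f x) = blockIndex (f y) := by
  have hadj (i) (hi : cycleAdj (blockIndex (f x)) i) : cycleAdj (blockIndex (f y)) i := by
    have := (mem_cayleyAut_stdS_iff.mp hf x (f⁻¹ (r i))).mpr (by simpa using hi)
    simpa using (mem_cayleyAut_stdS_iff.mp hf y (f⁻¹ (r i))).mp (hxy ▸ this)
  refine (eq_of_cycleAdj_add_one_of_cycleAdj_sub_one h4 (hadj _ ?_) (hadj _ ?_)).symm
  · exact Or.inl (add_sub_cancel_left _ _)
  · exact Or.inr (by ring)

theorem exists_mulRight_of_mem_cayleyAut [NeZero n] (h4 : (4 : ZMod n) ≠ 0)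
    {f : Equiv.Perm (DihedralGroup n)} (hf : f ∈ cayleyAut (DihedralGroup n) (stdS n)) :
    ∃ g, ∀ x, blockIndex (f x) = blockIndex (x * g) := by
  set c : ZMod n → ZMod n := fun i ↦ blockIndex (f (r i))
  have hfc (x) : blockIndex (f x) = c (blockIndex x) :=
    blockIndex_apply_eq_of_mem_cayleyAut h4 hf (by simp)
  have hc : Function.Injective c := fun i j hij ↦ by
    simpa using blockIndex_apply_eq_of_mem_cayleyAut h4 (inv_mem hf) hij
  have hadj (i) : cycleAdj (c i) (c (i + 1)) :=
    (mem_cayleyAut_stdS_iff.mp hf _ _).mp (Or.inl (add_sub_cancel_left _ _))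
  obtain ⟨ε, hε⟩ :=
    exists_units_mul_add_of_cycleAdj (two_ne_zero_of_four_ne_zero h4) hc hadj
  obtain ⟨g, hg, hg'⟩ := exists_sign_eq_blockIndex_eq ε (c 0)
  exact ⟨g, fun x ↦ by rw [hfc, hε, blockIndex_mul, hg, hg']⟩

theorem mem_cayleyAut_stdS_iff_exists_mul_mulRight [NeZero n] (h4 : (4 : ZMod n) ≠ 0)
    (f : Equiv.Perm (DihedralGroup n)) :
    f ∈ cayleyAut (DihedralGroup n) (stdS n) ↔
      ∃ k ∈ blockKernel n, ∃ g : DihedralGroup n, f = k * Equiv.mulRight g := by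
  refine ⟨fun hf ↦ ?_, ?_⟩
  · obtain ⟨g, hg⟩ := exists_mulRight_of_mem_cayleyAut h4 hf
    refine ⟨f * (Equiv.mulRight g)⁻¹, mem_blockKernel_iff.mpr fun x ↦ ?_, g, by group⟩
    simpa using hg (x * g⁻¹)
  · rintro ⟨k, hk, g, rfl⟩
    exact mul_mem (blockKernel_le_cayleyAut hk) (mulRight_mem_cayleyAut _ g)

theorem eq_one_of_mem_blockKernel_of_mem_rightRegRep (h2 : (2 : ZMod n) ≠ 0)
    {f : Equiv.Perm (DihedralGroup n)} (hK : f ∈ blockKernel n)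
    (hR : f ∈ rightRegRep (DihedralGroup n)) : f = 1 := by
  obtain ⟨g, rfl⟩ := hR
  have h (x : DihedralGroup n) : blockIndex (x * g⁻¹) = blockIndex x :=
    mem_blockKernel_iff.mp hK x
  suffices g⁻¹ = 1 by rw [inv_eq_one.mp this, map_one]
  generalize g⁻¹ = u at h
  have h₀ := h (r 0)
  have h₁ := h (r 1)
  cases u with
  | r i =>
    simp only [blockIndex_mul, blockIndex_r, sign_r, Units.val_one, Int.cast_one, one_mul,
      zero_add] at h₀
    rw [h₀, r_zero]
  | sr i =>
    simp only [blockIndex_mul, blockIndex_r, blockIndex_sr, sign_sr] at h₀ h₁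
    push_cast at h₀ h₁
    exact absurd (by linear_combination h₀ - h₁) h2

end automorphisms

section kernel

variable {n : ℕ}

theorem apply_eq_or_eq_partner_of_mem_blockKernel {f : Equiv.Perm (DihedralGroup n)}
    (hf : f ∈ blockKernel n) (x : DihedralGroup n) : f x = x ∨ f x = partner x :=
  eq_or_eq_partner_of_blockIndex_eq (mem_blockKernel_iff.mp hf x)

theorem apply_partner_of_mem_blockKernel {f : Equiv.Perm (DihedralGroup n)}
    (hf : f ∈ blockKernel n) (x : DihedralGroup n) : f (partner x) = partner (f x) := by
  have hidx : blockIndex (f (partner x)) = blockIndex (f x) := by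
    simp [mem_blockKernel_iff.mp hf]
  refine (eq_or_eq_partner_of_blockIndex_eq hidx).resolve_left fun h ↦ ?_
  exact partner_ne x (f.injective h)

def blockFlip (c : ZMod n → Multiplicative (ZMod 2)) : Equiv.Perm (DihedralGroup n) :=
  Function.Involutive.toPerm (fun x ↦ if c (blockIndex x) = 1 then x else partner x) fun x ↦ by
    by_cases h : c (blockIndex x) = 1 <;> simp [h]

theorem blockFlip_apply (c : ZMod n → Multiplicative (ZMod 2)) (x : DihedralGroup n) :
    blockFlip c x = if c (blockIndex x) = 1 then x else partner x := rfl

theorem blockIndex_blockFlip (c : ZMod n → Multiplicative (ZMod 2)) (x : DihedralGroup n) :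
    blockIndex (blockFlip c x) = blockIndex x := by
  rw [blockFlip_apply]; split_ifs <;> simp

theorem blockFlip_mem_blockKernel (c : ZMod n → Multiplicative (ZMod 2)) :
    blockFlip c ∈ blockKernel n :=
  mem_blockKernel_iff.mpr (blockIndex_blockFlip c)

def blockFlipHom : (ZMod n → Multiplicative (ZMod 2)) →* blockKernel n where
  toFun c := ⟨blockFlip c, blockFlip_mem_blockKernel c⟩
  map_one' := by ext; simp [blockFlip_apply]
  map_mul' c d := by
    ext x
    rw [Subgroup.coe_mul, Equiv.Perm.mul_apply, blockFlip_apply, blockFlip_apply c,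
      blockIndex_blockFlip, blockFlip_apply d, Pi.mul_apply]
    rcases Multiplicative.zmod_two_eq_one_or (c (blockIndex x)) with hc | hc <;>
      rcases Multiplicative.zmod_two_eq_one_or (d (blockIndex x)) with hd | hd <;>
      simp [hc, hd, ← ofAdd_add, (by decide : (1 : ZMod 2) + 1 = 0)]

theorem blockFlipHom_injective : Function.Injective (blockFlipHom (n := n)) := by
  refine (injective_iff_map_eq_one _).mpr fun c hc ↦ funext fun i ↦ ?_
  have h := congrArg (fun k : blockKernel n ↦ (k : Equiv.Perm (DihedralGroup n)) (r i)) hc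
  rw [Pi.one_apply]
  by_contra hci
  simp [blockFlipHom, blockFlip_apply, hci, partner_ne] at h

theorem blockFlipHom_surjective : Function.Surjective (blockFlipHom (n := n)) := by
  intro ⟨k, hk⟩
  refine ⟨fun i ↦ if k (r i) = r i then 1 else Multiplicative.ofAdd 1, Subtype.ext ?_⟩
  ext x
  obtain ⟨i, hx⟩ : ∃ i, x = r i ∨ x = partner (r i) :=
    ⟨blockIndex x, eq_or_eq_partner_of_blockIndex_eq (blockIndex_r _).symm⟩
  rcases apply_eq_or_eq_partner_of_mem_blockKernel hk (r i) with h | h <;>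
    rcases hx with rfl | rfl <;>
    simp [blockFlipHom, blockFlip_apply, h, apply_partner_of_mem_blockKernel hk, partner_ne]

noncomputable def blockKernelEquiv [NeZero n] :
    blockKernel n ≃* (Fin n → Multiplicative (ZMod 2)) :=
  (MulEquiv.ofBijective _ ⟨blockFlipHom_injective, blockFlipHom_surjective⟩).symm.trans
    (MulEquiv.arrowCongr (ZMod.finEquiv n).toEquiv.symm (MulEquiv.refl _))

end kernel

section complement

variable {n : ℕ}

theorem blockKernel_subgroupOf_normal (h4 : (4 : ZMod n) ≠ 0) :
    ((blockKernel n).subgroupOf (cayleyAut (DihedralGroup n) (stdS n))).Normal := by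
  refine (Subgroup.normal_subgroupOf_iff blockKernel_le_cayleyAut).mpr fun k f hk hf ↦ ?_
  refine mem_blockKernel_iff.mpr fun x ↦ ?_
  simpa using blockIndex_apply_eq_of_mem_cayleyAut h4 hf (mem_blockKernel_iff.mp hk (f⁻¹ x))

theorem isComplement'_blockKernel_rightRegRep [NeZero n] (h4 : (4 : ZMod n) ≠ 0) :
    ((blockKernel n).subgroupOf (cayleyAut (DihedralGroup n) (stdS n))).IsComplement'
      ((rightRegRep (DihedralGroup n)).subgroupOf (cayleyAut (DihedralGroup n) (stdS n))) := by
  refine Subgroup.isComplement'_of_disjoint_and_mul_eq_univ ?_ ?_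
  · refine Subgroup.disjoint_def.mpr fun {f} hK hR ↦ Subtype.ext ?_
    exact eq_one_of_mem_blockKernel_of_mem_rightRegRep (two_ne_zero_of_four_ne_zero h4)
      (Subgroup.mem_subgroupOf.mp hK) (Subgroup.mem_subgroupOf.mp hR)
  · refine Set.eq_univ_of_forall fun f ↦ ?_
    obtain ⟨k, hk, g, hf⟩ := (mem_cayleyAut_stdS_iff_exists_mul_mulRight h4 f).mp f.2
    exact ⟨⟨k, blockKernel_le_cayleyAut hk⟩, hk, ⟨_, mulRight_mem_cayleyAut _ g⟩,
      ⟨g⁻¹, by simp [rightRegHom]⟩, Subtype.ext hf.symm⟩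

theorem card_cayleyAut_stdS [NeZero n] (h4 : (4 : ZMod n) ≠ 0) :
    Nat.card (cayleyAut (DihedralGroup n) (stdS n)) = 2 ^ (n + 1) * n := by
  rw [← (isComplement'_blockKernel_rightRegRep h4).card_mul_card,
    Nat.card_congr (Subgroup.subgroupOfEquivOfLe blockKernel_le_cayleyAut).toEquiv,
    Nat.card_congr (blockKernelEquiv (n := n)).toEquiv,
    Nat.card_congr (Subgroup.subgroupOfEquivOfLe (rightRegRep_le_cayleyAut (stdS n))).toEquiv,
    card_rightRegRep, DihedralGroup.nat_card]
  simp only [Nat.card_eq_fintype_card, Fintype.card_pi, Fintype.card_multiplicative, ZMod.card,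
    Finset.prod_const, Finset.card_univ, Fintype.card_fin]
  ring

theorem isSolvable_cayleyAut_stdS [NeZero n] (h4 : (4 : ZMod n) ≠ 0) :
    Group.IsSolvable (cayleyAut (DihedralGroup n) (stdS n)) := by
  have := blockKernel_subgroupOf_normal h4
  have eK := (Subgroup.subgroupOfEquivOfLe blockKernel_le_cayleyAut).trans
    (blockKernelEquiv (n := n))
  have eR := Subgroup.subgroupOfEquivOfLe (rightRegRep_le_cayleyAut (stdS n))
  have : Group.IsSolvable ((blockKernel n).subgroupOf (cayleyAut (DihedralGroup n) (stdS n))) :=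
    Group.isSolvable_of_surjective (f := eK.symm.toMonoidHom) eK.symm.surjective
  have : Group.IsSolvable
      ((rightRegRep (DihedralGroup n)).subgroupOf (cayleyAut (DihedralGroup n) (stdS n))) :=
    Group.isSolvable_of_surjective (f := eR.symm.toMonoidHom) eR.symm.surjective
  exact (isComplement'_blockKernel_rightRegRep h4).symm.isSolvable

end complement

/-- Let `n ≥ 3` be odd, `S = {a, a⁻¹, a²b, b}` and `Γ = Cay(D_{2n}, S)`. Then
`Aut(Γ) = K·R(D_{2n})` where `K ≅ Z₂ⁿ` is the kernel of the action of `Aut(Γ)` on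
the blocks `⟨ab⟩aⁱ`, `K ∩ R(D_{2n}) = 1`, `|Aut(Γ)| = 2^{n+1}·n`, and `Aut(Γ)` is
soluble. -/
theorem cayley_dihedral_aut_structure (n : ℕ) (hn : 3 ≤ n) (hodd : Odd n) :
    (∀ f : Equiv.Perm (DihedralGroup n),
      f ∈ cayleyAut (DihedralGroup n) (stdS n) ↔
        ∃ k ∈ blockKernel n, ∃ g : DihedralGroup n, f = k * Equiv.mulRight g) ∧
    Nonempty (blockKernel n ≃* (Fin n → Multiplicative (ZMod 2))) ∧
    (∀ f, f ∈ blockKernel n → f ∈ rightRegRep (DihedralGroup n) → f = 1) ∧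
    Nat.card (cayleyAut (DihedralGroup n) (stdS n)) = 2 ^ (n + 1) * n ∧
    IsSolvable (cayleyAut (DihedralGroup n) (stdS n)) := by
  have : NeZero n := ⟨by omega⟩
  have h4 : (4 : ZMod n) ≠ 0 := ZMod.four_ne_zero_of_odd (by omega) hodd
  exact ⟨mem_cayleyAut_stdS_iff_exists_mul_mulRight h4, ⟨blockKernelEquiv⟩,
    fun _ ↦ eq_one_of_mem_blockKernel_of_mem_rightRegRep (two_ne_zero_of_four_ne_zero h4),
    card_cayleyAut_stdS h4, isSolvable_cayleyAut_stdS h4⟩
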